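/- arXiv:0807.0744 — 2 statements merged into one kernel-verified Lean document; each statement's English description precedes it below -/
import Mathlib

section
/- Let Q = ℝ^d with a continuous Finsler dissipation R₁ (each R₁(q,·) a norm), induced complete Finsler distance d, and E ∈ C¹([0,T] × ℝ^d; ℝ). An absolutely continuous curve (t̂,q̂) : [s₀,s₁] → [0,T] × ℝ^d is a parametrized metric solution of (ℝ^d,d,E) if and only if there exists λ : (s₀,s₁) → [1,∞) such that for a.e. s ∈ (s₀,s₁): 0 ∈ λ(s) ∂_v R₁(q̂(s), q̂'(s)) + D_qE(t̂(s),q̂(s)), t̂'(s) ≥ 0, λ(s) ≥ 1, (λ(s) − 1) t̂'(s) = 0, and t̂'(s) + R₁(q̂(s), q̂'(s)) > 0, where ∂_v R₁(q,·) denotes the convex subdifferential of the norm v ↦ R₁(q,v). -/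
open MeasureTheory Filter Set Function
open scoped Topology ENNReal RealInnerProductSpace

noncomputable section

/-- `y` is absolutely continuous on `[a,b]` with (a.e.) derivative `y'`:
it is the integral of the integrable function `y'`. -/
structure IsACOn {W : Type*} [NormedAddCommGroup W] [NormedSpace ℝ W]
    (a b : ℝ) (y : ℝ → W) (y' : ℝ → W) : Prop where
  intg : IntervalIntegrable y' volume a b
  eq : ∀ t ∈ Set.Icc a b, y t = y a + ∫ s in a..t, y' s

/-- A continuous Finsler dissipation: `R1 q ·` is a norm for every `q`. -/
structure IsFinsler {V : Type*} [NormedAddCommGroup V] [NormedSpace ℝ V]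
    (R1 : V → V → ℝ) : Prop where
  cont : Continuous fun p : V × V => R1 p.1 p.2
  nonneg : ∀ q v, 0 ≤ R1 q v
  eq_zero_iff : ∀ q v, R1 q v = 0 ↔ v = 0
  smul : ∀ (q : V) (c : ℝ) (v : V), R1 q (c • v) = |c| * R1 q v
  triangle : ∀ q u v, R1 q (u + v) ≤ R1 q u + R1 q v

/-- The Finsler distance induced by the dissipation `R1`. -/
def finslerDist {V : Type*} [NormedAddCommGroup V] [NormedSpace ℝ V]
    (R1 : V → V → ℝ) (q0 q1 : V) : ℝ :=
  sInf {L | ∃ y y' : ℝ → V, IsACOn 0 1 y y' ∧ y 0 = q0 ∧ y 1 = q1 ∧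
    L = ∫ s in (0:ℝ)..1, R1 (y s) (y' s)}

/-- Completeness of the space w.r.t. a distance function `dF`. -/
def IsCompleteD {V : Type*} (dF : V → V → ℝ) : Prop :=
  ∀ u : ℕ → V, (∀ ε > 0, ∃ N, ∀ m ≥ N, ∀ n ≥ N, dF (u m) (u n) < ε) →
    ∃ x : V, Filter.Tendsto (fun k => dF (u k) x) Filter.atTop (𝓝 0)

/-- `E` is a `C¹` energy with partial time derivative `Et` and spatial gradient `DqE`. -/
structure IsC1Energy {V : Type*} [NormedAddCommGroup V] [InnerProductSpace ℝ V]
    [CompleteSpace V] (E Et : ℝ → V → ℝ) (DqE : ℝ → V → V) : Prop where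
  contE : Continuous fun p : ℝ × V => E p.1 p.2
  contEt : Continuous fun p : ℝ × V => Et p.1 p.2
  contDqE : Continuous fun p : ℝ × V => DqE p.1 p.2
  hasDerivT : ∀ t q, HasDerivAt (fun τ => E τ q) (Et t q) t
  hasGrad : ∀ t q, HasGradientAt (fun x => E t x) (DqE t q) q

/-- The local slope `|∂E|(t,q) = sup_{v ≠ 0} ⟨D_qE(t,q), v⟩ / R₁(q,v)`. -/
def localSlope {V : Type*} [NormedAddCommGroup V] [InnerProductSpace ℝ V]
    (R1 : V → V → ℝ) (DqE : ℝ → V → V) (t : ℝ) (q : V) : ℝ :=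
  sSup {r | ∃ v : V, v ≠ 0 ∧ r = (inner ℝ (DqE t q) v : ℝ) / R1 q v}

/-- The limit function `M₀` (with values in `EReal`). -/
def M0 (a v x : ℝ) : EReal :=
  if a = 0 then ((v + v * max (x - 1) 0 : ℝ) : EReal)
  else if x ≤ 1 then ((v : ℝ) : EReal) else ⊤

/-- The limit function `M₀` (with values in `ℝ≥0∞`). -/
def M0E (a v x : ℝ) : ℝ≥0∞ :=
  if a = 0 then ENNReal.ofReal (v + v * max (x - 1) 0)
  else if x ≤ 1 then ENNReal.ofReal v else ⊤

/-- The viscous functional `M_ε` (with values in `ℝ≥0∞`). -/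
def MepsE (ε a v x : ℝ) : ℝ≥0∞ :=
  if a = 0 then (if v = 0 then 0 else ⊤)
  else ENNReal.ofReal (v + ε / (2 * a) * v ^ 2 + a / (2 * ε) * (max (x - 1) 0) ^ 2)

/-- Convex subdifferential of a real-valued function. -/
def subdiff {V : Type*} [NormedAddCommGroup V] [InnerProductSpace ℝ V]
    (f : V → ℝ) (v : V) : Set V :=
  {w | ∀ u, f v + (inner ℝ w (u - v) : ℝ) ≤ f u}

/-- Convex subdifferential of an extended-real-valued function. -/
def subdiffE {V : Type*} [NormedAddCommGroup V] [InnerProductSpace ℝ V]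
    (f : V → EReal) (v : V) : Set V :=
  {w | ∀ u, f v + (((inner ℝ w (u - v) : ℝ) : ℝ) : EReal) ≤ f u}

/-- `R̂(q,v) = R₁(q,v)` if `R₁(q,v) ≤ 1`, `+∞` otherwise. -/
def Rhat {V : Type*} (R1 : V → V → ℝ) (q v : V) : EReal :=
  if R1 q v ≤ 1 then ((R1 q v : ℝ) : EReal) else ⊤

/-- A parametrized metric solution of the rate-independent system `(ℝ^d, d, E)`. -/
structure IsParamSol {V : Type*} [NormedAddCommGroup V] [InnerProductSpace ℝ V]
    [CompleteSpace V]
    (R1 : V → V → ℝ) (E Et : ℝ → V → ℝ) (DqE : ℝ → V → V) (T s₀ s₁ : ℝ)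
    (th th' : ℝ → ℝ) (qh qh' : ℝ → V) : Prop where
  acT : IsACOn s₀ s₁ th th'
  acQ : IsACOn s₀ s₁ qh qh'
  maps : ∀ s ∈ Set.Icc s₀ s₁, th s ∈ Set.Icc 0 T
  mono : MonotoneOn th (Set.Icc s₀ s₁)
  nondeg : ∀ᵐ s ∂volume, s ∈ Set.Ioo s₀ s₁ → 0 < th' s + R1 (qh s) (qh' s)
  evi : ∀ᵐ s ∂volume, s ∈ Set.Ioo s₀ s₁ →
    ((deriv (fun r => E (th r) (qh r)) s - Et (th s) (qh s) * th' s : ℝ) : EReal)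
      ≤ -(M0 (th' s) (R1 (qh s) (qh' s)) (localSlope R1 DqE (th s) (qh s)))

/-- A solution of the viscous `ψ_ε`-gradient system. -/
structure IsViscousSol {V : Type*} [NormedAddCommGroup V] [InnerProductSpace ℝ V]
    [CompleteSpace V]
    (R1 : V → V → ℝ) (E Et : ℝ → V → ℝ) (DqE : ℝ → V → V) (T ε : ℝ)
    (q q' : ℝ → V) : Prop where
  ac : IsACOn 0 T q q'
  evi : ∀ᵐ t ∂volume, t ∈ Set.Ioo 0 T →
    deriv (fun τ => E τ (q τ)) t ≤ Et t (q t)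
      - (R1 (q t) (q' t) + ε / 2 * (R1 (q t) (q' t)) ^ 2)
      - (max (localSlope R1 DqE t (q t) - 1) 0) ^ 2 / (2 * ε)

/-- Total variation of `q` on the set `I`, w.r.t. the distance function `dF`. -/
def varWith {Y : Type*} (dF : Y → Y → ℝ) (q : ℝ → Y) (I : Set ℝ) : ℝ≥0∞ :=
  ⨆ p : ℕ × {u : ℕ → ℝ // Monotone u ∧ ∀ i, u i ∈ I},
    ∑ i ∈ Finset.range p.1, ENNReal.ofReal (dF (q (p.2.1 i)) (q (p.2.1 (i + 1))))

/-- Left limit of a curve at `t`, with the convention `q(0⁻) = q(0)`. -/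
def llim {Y : Type*} [TopologicalSpace Y] (q : ℝ → Y) (t : ℝ) : Y :=
  if t ≤ 0 then q t else Function.leftLim q t

/-- Right limit of a curve at `t`, with the convention `q(T⁺) = q(T)`. -/
def rlim {Y : Type*} [TopologicalSpace Y] (T : ℝ) (q : ℝ → Y) (t : ℝ) : Y :=
  if T ≤ t then q t else Function.rightLim q t

/-- Continuity set of a curve `q : [0,T] → Y`. -/
def contSet {Y : Type*} [TopologicalSpace Y] (T : ℝ) (q : ℝ → Y) : Set ℝ :=
  {t | t ∈ Set.Icc 0 T ∧ llim q t = q t ∧ rlim T q t = q t}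

/-- Jump set of a curve `q : [0,T] → Y`. -/
def jumpSet {Y : Type*} [TopologicalSpace Y] (T : ℝ) (q : ℝ → Y) : Set ℝ :=
  Set.Icc 0 T \ contSet T q

/-- The (clamped) variation function `t ↦ Var(q, [0, min(t,T)])`, real-valued. -/
def vFun {Y : Type*} (dF : Y → Y → ℝ) (T : ℝ) (q : ℝ → Y) (t : ℝ) : ℝ :=
  (varWith dF q (Set.Icc 0 (min t T))).toReal

/-- `μ` is the Lebesgue–Stieltjes measure (distributional derivative) of the
variation function of `q` w.r.t. the distance `dF`. -/
def IsVarMeasure {Y : Type*} (dF : Y → Y → ℝ) (T : ℝ) (q : ℝ → Y)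
    (μ : Measure ℝ) : Prop :=
  ∀ a b : ℝ, a ≤ b → μ (Set.Ioc a b) =
    ENNReal.ofReal (Function.rightLim (vFun dF T q) b - Function.rightLim (vFun dF T q) a)

/-- Metric derivative of a curve in a (pseudo-)metric space. -/
def mderiv {Y : Type*} [PseudoMetricSpace Y] (y : ℝ → Y) (s : ℝ) : ℝ :=
  Filter.limsup (fun h : ℝ => dist (y (s + h)) (y s) / |h|) (𝓝[≠] (0 : ℝ))

/-- The slope distance `S_α(t; q₀, q₁)`. -/
def slopeDist {V : Type*} [NormedAddCommGroup V] [InnerProductSpace ℝ V]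
    (R1 : V → V → ℝ) (DqE : ℝ → V → V) (α t : ℝ) (q0 q1 : V) : ℝ :=
  sInf {r | ∃ y y' : ℝ → V, IsACOn 0 1 y y' ∧ y 0 = q0 ∧ y 1 = q1 ∧
    r = ∫ s in (0:ℝ)..1, max (localSlope R1 DqE t (y s)) α * R1 (y s) (y' s)}

/-- The dissipation functional `Σ₀(q, [t₀,t₁])`. -/
def Sigma0 {V : Type*} [NormedAddCommGroup V] [InnerProductSpace ℝ V]
    (R1 : V → V → ℝ) (DqE : ℝ → V → V) (T : ℝ) (q : ℝ → V) (μ : Measure ℝ)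
    (t₀ t₁ : ℝ) : ℝ≥0∞ :=
  (∫⁻ r in Set.Ioo t₀ t₁, ENNReal.ofReal (localSlope R1 DqE r (q r))
      ∂(μ.restrict (contSet T q)))
  + ENNReal.ofReal (slopeDist R1 DqE 0 t₀ (q t₀) (rlim T q t₀))
  + ENNReal.ofReal (slopeDist R1 DqE 0 t₁ (llim q t₁) (q t₁))
  + ∑' t : ↥(jumpSet T q ∩ Set.Ioo t₀ t₁),
      (ENNReal.ofReal (slopeDist R1 DqE 0 t (llim q t) (q t))
       + ENNReal.ofReal (slopeDist R1 DqE 0 t (q t) (rlim T q t)))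

/-- The functional `Γ(q,[t₀,t₁])`. -/
def GammaFn {V : Type*} [NormedAddCommGroup V] [InnerProductSpace ℝ V]
    (R1 : V → V → ℝ) (DqE : ℝ → V → V) (E : ℝ → V → ℝ) (T : ℝ) (q : ℝ → V)
    (μ : Measure ℝ) (t₀ t₁ : ℝ) : ℝ≥0∞ :=
  (∫⁻ r in Set.Ioo t₀ t₁, ENNReal.ofReal (localSlope R1 DqE r (q r))
      ∂(μ.restrict (contSet T q)))
  + ENNReal.ofReal (|E t₀ (q t₀) - E t₀ (rlim T q t₀)|)
  + ENNReal.ofReal (|E t₁ (llim q t₁) - E t₁ (q t₁)|)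
  + ∑' t : ↥(jumpSet T q ∩ Set.Ioo t₀ t₁),
      (ENNReal.ofReal (|E (↑t) (q t) - E (↑t) (rlim T q t)|)
       + ENNReal.ofReal (|E (↑t) (llim q t) - E (↑t) (q t)|))

/-- The dissipation functional `Σ₁(q, [t₀,t₁])`. -/
def Sigma1 {V : Type*} [NormedAddCommGroup V] [InnerProductSpace ℝ V]
    (R1 : V → V → ℝ) (DqE : ℝ → V → V) (T : ℝ) (q : ℝ → V) (μ : Measure ℝ)
    (t₀ t₁ : ℝ) : ℝ≥0∞ :=
  (∫⁻ r in Set.Ioo t₀ t₁, ENNReal.ofReal (max (localSlope R1 DqE r (q r)) 1)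
      ∂(μ.restrict (contSet T q)))
  + (∫⁻ r in Set.Ioo t₀ t₁, ENNReal.ofReal (localSlope R1 DqE r (q r) - 1))
  + ENNReal.ofReal (slopeDist R1 DqE 1 t₀ (q t₀) (rlim T q t₀))
  + ENNReal.ofReal (slopeDist R1 DqE 1 t₁ (llim q t₁) (q t₁))
  + ∑' t : ↥(jumpSet T q ∩ Set.Ioo t₀ t₁),
      (ENNReal.ofReal (slopeDist R1 DqE 1 t (llim q t) (q t))
       + ENNReal.ofReal (slopeDist R1 DqE 1 t (q t) (rlim T q t)))

/-- A BV solution of the rate-independent system `(ℝ^d, d, E)`, where `μ` is the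
variation measure of `q`. -/
structure IsBVSol {V : Type*} [NormedAddCommGroup V] [InnerProductSpace ℝ V]
    (R1 : V → V → ℝ) (E Et : ℝ → V → ℝ) (DqE : ℝ → V → V) (T : ℝ) (q : ℝ → V)
    (μ : Measure ℝ) : Prop where
  en : ∀ t₀ t₁ : ℝ, 0 ≤ t₀ → t₀ < t₁ → t₁ ≤ T →
    ((E t₁ (q t₁) - E t₀ (q t₀) - ∫ t in t₀..t₁, Et t (q t) : ℝ) : EReal)
      ≤ -((Sigma0 R1 DqE T q μ t₀ t₁ : ℝ≥0∞) : EReal)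
  locstab : ∀ t ∈ Set.Icc 0 T \ jumpSet T q, localSlope R1 DqE t (q t) ≤ 1
  suppstab : ∀ t : ℝ, (∀ ε > 0, μ (Set.Ioo (t - ε) (t + ε)) ≠ 0) →
    1 ≤ localSlope R1 DqE t (q t)
  jump : ∀ t ∈ jumpSet T q, ∃ (y y' : ℝ → V) (θt : ℝ),
    IsACOn 0 1 y y' ∧ y 0 = llim q t ∧ y 1 = rlim T q t ∧ θt ∈ Set.Icc (0:ℝ) 1 ∧
    y θt = q t ∧ (∀ θ ∈ Set.Icc (0:ℝ) 1, 1 ≤ localSlope R1 DqE t (y θ)) ∧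
    E t (rlim T q t) - E t (llim q t)
      = -∫ θ in (0:ℝ)..1, localSlope R1 DqE t (y θ) * R1 (y θ) (y' θ)

/-- An energetic solution of the rate-independent system `(ℝ^d, d, E)`. -/
def IsEnergeticSol {V : Type*} [NormedAddCommGroup V] [InnerProductSpace ℝ V]
    (R1 : V → V → ℝ) (E Et : ℝ → V → ℝ) (T : ℝ) (q : ℝ → V) : Prop :=
  ∀ t ∈ Set.Icc (0:ℝ) T,
    (∀ p, E t (q t) ≤ E t p + finslerDist R1 (q t) p) ∧
    E t (q t) + (varWith (finslerDist R1) q (Set.Icc 0 t)).toReal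
      = E 0 (q 0) + ∫ s in (0:ℝ)..t, Et s (q s)

/-- The global slope of `E(t,·)` at `q`, w.r.t. the distance `dF`. -/
def gSlopeD {V : Type*} (dF : V → V → ℝ) (E : ℝ → V → ℝ) (t : ℝ) (q : V) : ℝ≥0∞ :=
  ⨆ (v : V) (_ : v ≠ q), ENNReal.ofReal (max (E t q - E t v) 0 / dF q v)

end


/-
For a.e. `s` both components of the curve are differentiable, and the chain rule turns the
energy-dissipation inequality into `⟪D_qE, q̂'⟫ ≤ -M₀(t̂', R₁(q̂, q̂'), |∂E|)`, while monotonicity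
of `t̂` amounts to `t̂' ≥ 0` a.e. As `|∂E|` is the dual norm of `D_qE` with respect to `R₁(q̂, ·)`,
always `⟪D_qE, q̂'⟫ ≥ -|∂E| R₁(q̂, q̂')`, and `-D_qE ∈ λ ∂R₁(q̂, ·)(q̂')` means exactly `|∂E| ≤ λ`
and `⟪D_qE, q̂'⟫ = -λ R₁(q̂, q̂')`. The `M₀`-inequality reads
`⟪D_qE, q̂'⟫ ≤ -max(|∂E|, 1) R₁(q̂, q̂')` together with `|∂E| ≤ 1` where `t̂' > 0`; hence it holds
iff the inclusion holds with `λ = max(|∂E|, 1)`, and any admissible `λ ≥ 1` forces it.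
-/

theorem coe_le_neg_M0_iff (r α n ξ : ℝ) :
    (r : EReal) ≤ -M0 α n ξ ↔ r ≤ -(n * max ξ 1) ∧ (max ξ 1 - 1) * α = 0 := by
  unfold M0
  split_ifs with hα hξ
  · have : n + n * max (ξ - 1) 0 = n * max ξ 1 := by
      rcases le_total ξ 1 with h | h
      · rw [max_eq_right (by linarith), max_eq_right h]; ring
      · rw [max_eq_left (by linarith), max_eq_left h]; ring
    rw [this, ← EReal.coe_neg, EReal.coe_le_coe_iff, hα, mul_zero]
    simp
  · simp [max_eq_right hξ, ← EReal.coe_neg]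
  · have : max ξ 1 - 1 ≠ 0 := by rw [max_eq_left (not_le.1 hξ).le]; linarith
    simp [hα, this]

section Finsler

variable {V : Type*} [NormedAddCommGroup V] [InnerProductSpace ℝ V] {R1 : V → V → ℝ}

namespace IsFinsler

theorem map_zero (hR : IsFinsler R1) (q : V) : R1 q 0 = 0 :=
  (hR.eq_zero_iff q 0).2 rfl

theorem map_neg (hR : IsFinsler R1) (q v : V) : R1 q (-v) = R1 q v := by
  simpa using hR.smul q (-1) v

theorem pos (hR : IsFinsler R1) (q : V) {v : V} (hv : v ≠ 0) : 0 < R1 q v :=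
  (hR.nonneg q v).lt_of_ne fun h => hv ((hR.eq_zero_iff q v).1 h.symm)

theorem exists_pos_mul_norm_le [FiniteDimensional ℝ V] (hR : IsFinsler R1) (q : V) :
    ∃ c > 0, ∀ v, c * ‖v‖ ≤ R1 q v := by
  rcases subsingleton_or_nontrivial V with hV | hV
  · exact ⟨1, one_pos, fun v => by simp [Subsingleton.elim v 0, hR.map_zero]⟩
  have hcont : Continuous (R1 q) := hR.cont.comp (continuous_const.prodMk continuous_id)
  obtain ⟨v₀, hv₀, hmin⟩ := (isCompact_sphere (0 : V) 1).exists_isMinOn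
    (NormedSpace.sphere_nonempty.2 zero_le_one) hcont.continuousOn
  refine ⟨R1 q v₀, hR.pos q (ne_zero_of_mem_sphere one_ne_zero ⟨v₀, hv₀⟩), fun v => ?_⟩
  rcases eq_or_ne v 0 with rfl | hv
  · simp [hR.map_zero]
  have hv' : 0 < ‖v‖ := norm_pos_iff.2 hv
  have hle : R1 q v₀ ≤ R1 q (‖v‖⁻¹ • v) := hmin (by simp [norm_smul, hv'.ne'])
  rw [hR.smul, abs_of_pos (inv_pos.2 hv')] at hle
  calc R1 q v₀ * ‖v‖ ≤ ‖v‖⁻¹ * R1 q v * ‖v‖ := by gcongr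
    _ = R1 q v := by field_simp

theorem mem_subdiff_iff (hR : IsFinsler R1) {q v w : V} :
    w ∈ subdiff (R1 q) v ↔ (∀ u, ⟪w, u⟫ ≤ R1 q u) ∧ ⟪w, v⟫ = R1 q v := by
  refine ⟨fun h => ?_, fun ⟨hdual, hv⟩ u => ?_⟩
  · have h2 := h ((2 : ℝ) • v)
    have h0 := h 0
    rw [hR.smul, two_smul, add_sub_cancel_right] at h2
    rw [hR.map_zero, zero_sub, inner_neg_right] at h0
    have hv : ⟪w, v⟫ = R1 q v := by norm_num at h2; linarith
    refine ⟨fun u => ?_, hv⟩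
    have := h u
    rw [inner_sub_right, hv] at this
    linarith
  · rw [inner_sub_right, hv]
    linarith [hdual u]

end IsFinsler

variable {DqE : ℝ → V → V} {t : ℝ} {q : V}

theorem localSlope_le (hR : IsFinsler R1) {a : ℝ} (ha : 0 ≤ a)
    (h : ∀ v, ⟪DqE t q, v⟫ ≤ a * R1 q v) :
    localSlope R1 DqE t q ≤ a := by
  refine Real.sSup_le ?_ ha
  rintro r ⟨v, hv, rfl⟩
  rw [div_le_iff₀ (hR.pos q hv)]
  exact h v

variable [FiniteDimensional ℝ V] (DqE t q)

theorem inner_le_localSlope_mul (hR : IsFinsler R1) (v : V) :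
    ⟪DqE t q, v⟫ ≤ localSlope R1 DqE t q * R1 q v := by
  rcases eq_or_ne v 0 with rfl | hv
  · simp [hR.map_zero]
  obtain ⟨c, hc, hcR⟩ := hR.exists_pos_mul_norm_le q
  have hbdd : BddAbove {r | ∃ v : V, v ≠ 0 ∧ r = ⟪DqE t q, v⟫ / R1 q v} := by
    refine ⟨‖DqE t q‖ / c, ?_⟩
    rintro r ⟨u, hu, rfl⟩
    rw [div_le_div_iff₀ (hR.pos q hu) hc]
    calc ⟪DqE t q, u⟫ * c ≤ ‖DqE t q‖ * (c * ‖u‖) := by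
          nlinarith [real_inner_le_norm (DqE t q) u]
      _ ≤ ‖DqE t q‖ * R1 q u := by gcongr; exact hcR u
  rw [← div_le_iff₀ (hR.pos q hv)]
  exact le_csSup hbdd ⟨v, hv, rfl⟩

theorem neg_localSlope_mul_le_inner (hR : IsFinsler R1) (v : V) :
    -(localSlope R1 DqE t q * R1 q v) ≤ ⟪DqE t q, v⟫ := by
  have := inner_le_localSlope_mul DqE t q hR (-v)
  rwa [inner_neg_right, hR.map_neg, neg_le] at this

variable {DqE t q}

theorem exists_mem_subdiff_smul_add_eq_zero_iff (hR : IsFinsler R1) {v : V} {lam : ℝ}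
    (hlam : 0 < lam) :
    (∃ w ∈ subdiff (R1 q) v, lam • w + DqE t q = 0) ↔
      localSlope R1 DqE t q ≤ lam ∧ ⟪DqE t q, v⟫ = -(lam * R1 q v) := by
  constructor
  · rintro ⟨w, hw, hsum⟩
    obtain ⟨hdual, hwv⟩ := hR.mem_subdiff_iff.1 hw
    have hg : DqE t q = -(lam • w) := eq_neg_of_add_eq_zero_right hsum
    refine ⟨localSlope_le hR hlam.le fun u => ?_,
      by rw [hg, inner_neg_left, real_inner_smul_left, hwv]⟩
    have := hdual (-u)
    rw [inner_neg_right, hR.map_neg] at this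
    rw [hg, inner_neg_left, real_inner_smul_left]
    nlinarith
  · rintro ⟨hslope, hgv⟩
    refine ⟨-lam⁻¹ • DqE t q, hR.mem_subdiff_iff.2 ⟨fun u => ?_, ?_⟩, by
      rw [smul_smul, mul_neg, mul_inv_cancel₀ hlam.ne', neg_one_smul, neg_add_cancel]⟩
    · have := neg_localSlope_mul_le_inner DqE t q hR u
      rw [real_inner_smul_left, neg_mul, ← mul_neg, inv_mul_le_iff₀ hlam]
      nlinarith [hR.nonneg q u]
    · rw [real_inner_smul_left, hgv]
      field_simp

theorem subgradient_of_coe_inner_le_neg_M0 (hR : IsFinsler R1) {v : V} {α : ℝ}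
    (h : (⟪DqE t q, v⟫ : EReal) ≤ -M0 α (R1 q v) (localSlope R1 DqE t q)) :
    (∃ w ∈ subdiff (R1 q) v, max (localSlope R1 DqE t q) 1 • w + DqE t q = 0) ∧
      (max (localSlope R1 DqE t q) 1 - 1) * α = 0 := by
  obtain ⟨hle, hcompl⟩ := (coe_le_neg_M0_iff _ _ _ _).1 h
  have hpos : 0 < max (localSlope R1 DqE t q) 1 := zero_lt_one.trans_le (le_max_right _ _)
  refine ⟨(exists_mem_subdiff_smul_add_eq_zero_iff hR hpos).2 ⟨le_max_left _ _, ?_⟩, hcompl⟩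
  nlinarith [neg_localSlope_mul_le_inner DqE t q hR v, le_max_left (localSlope R1 DqE t q) 1,
    hR.nonneg q v]

theorem coe_inner_le_neg_M0_of_subgradient (hR : IsFinsler R1) {v : V} {α lam : ℝ}
    (hlam : 1 ≤ lam) (hw : ∃ w ∈ subdiff (R1 q) v, lam • w + DqE t q = 0)
    (hcompl : (lam - 1) * α = 0) :
    (⟪DqE t q, v⟫ : EReal) ≤ -M0 α (R1 q v) (localSlope R1 DqE t q) := by
  obtain ⟨hslope, hgv⟩ :=
    (exists_mem_subdiff_smul_add_eq_zero_iff hR (zero_lt_one.trans_le hlam)).1 hw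
  refine (coe_le_neg_M0_iff _ _ _ _).2 ⟨?_, ?_⟩
  · rw [hgv]
    nlinarith [max_le hslope hlam, hR.nonneg q v]
  · rcases mul_eq_zero.1 hcompl with h | h
    · rw [max_eq_right (by linarith), sub_self, zero_mul]
    · rw [h, mul_zero]

end Finsler

theorem IsACOn.ae_hasDerivAt {W : Type*} [NormedAddCommGroup W] [NormedSpace ℝ W]
    [CompleteSpace W] {a b : ℝ} {y y' : ℝ → W} (h : IsACOn a b y y') :
    ∀ᵐ s, s ∈ Ioo a b → HasDerivAt y (y' s) s := by
  filter_upwards [h.intg.ae_hasDerivAt_integral] with s hs hmem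
  have hy' := hs (Ioo_subset_Icc_self.trans Icc_subset_uIcc hmem) a left_mem_uIcc
  refine (hy'.const_add (y a)).congr_of_eventuallyEq ?_
  filter_upwards [Icc_mem_nhds hmem.1 hmem.2] with r hr using h.eq r hr

theorem IsACOn.monotoneOn {a b : ℝ} {f f' : ℝ → ℝ} (h : IsACOn a b f f')
    (hf' : ∀ᵐ s, s ∈ Ioo a b → 0 ≤ f' s) : MonotoneOn f (Icc a b) := by
  intro x hx z hz hxz
  have hint : ∀ r ∈ Icc a b, IntervalIntegrable f' volume a r := fun r hr =>
    h.intg.mono_set (uIcc_subset_uIcc left_mem_uIcc (Icc_subset_uIcc hr))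
  have hf'Icc : ∀ᵐ s ∂volume.restrict (Icc a b), 0 ≤ f' s := by
    rw [← Measure.restrict_congr_set Ioo_ae_eq_Icc]
    exact (ae_restrict_iff' measurableSet_Ioo).2 hf'
  rw [h.eq x hx, h.eq z hz, add_le_add_iff_left,
    ← intervalIntegral.integral_add_adjacent_intervals (hint x hx)
      ((hint x hx).symm.trans (hint z hz)), le_add_iff_nonneg_right]
  exact intervalIntegral.integral_nonneg_of_ae_restrict hxz
    (ae_restrict_of_ae_restrict_of_subset (Icc_subset_Icc hx.1 hz.2) hf'Icc)

theorem IsC1Energy.hasDerivAt_comp {V : Type*} [NormedAddCommGroup V] [InnerProductSpace ℝ V]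
    [CompleteSpace V] {E Et : ℝ → V → ℝ} {DqE : ℝ → V → V} (hE : IsC1Energy E Et DqE)
    {th : ℝ → ℝ} {qh : ℝ → V} {α s : ℝ} {v : V}
    (hth : HasDerivAt th α s) (hqh : HasDerivAt qh v s) :
    HasDerivAt (fun r => E (th r) (qh r))
      (Et (th s) (qh s) * α + ⟪DqE (th s) (qh s), v⟫) s := by
  have hF := (hasStrictFDerivAt_uncurry_coprod (u := (th s, qh s))
    (f₁ := fun t q => ContinuousLinearMap.toSpanSingleton ℝ (Et t q))
    (f₂ := fun t q => innerSL ℝ (DqE t q))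
    (Eventually.of_forall fun p => (hE.hasDerivT p.1 p.2).hasFDerivAt)
    (Eventually.of_forall fun p => (hE.hasGrad p.1 p.2).hasFDerivAt)
    ((ContinuousLinearMap.toSpanSingletonCLE).continuous.comp hE.contEt).continuousAt
    ((innerSL ℝ).continuous.comp hE.contDqE).continuousAt).hasFDerivAt
  refine (hF.comp_hasDerivAt s (hth.prodMk hqh)).congr_deriv ?_
  simp [Function.HasUncurry.uncurry, mul_comm]

variable {d : ℕ}

theorem statement7_general (T s₀ s₁ : ℝ)
    (R1 : EuclideanSpace ℝ (Fin d) → EuclideanSpace ℝ (Fin d) → ℝ)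
    (hR : IsFinsler R1)
    (E Et : ℝ → EuclideanSpace ℝ (Fin d) → ℝ)
    (DqE : ℝ → EuclideanSpace ℝ (Fin d) → EuclideanSpace ℝ (Fin d))
    (hE : IsC1Energy E Et DqE)
    (th th' : ℝ → ℝ) (qh qh' : ℝ → EuclideanSpace ℝ (Fin d))
    (hACt : IsACOn s₀ s₁ th th') (hACq : IsACOn s₀ s₁ qh qh')
    (hmap : ∀ s ∈ Set.Icc s₀ s₁, th s ∈ Set.Icc 0 T) :
    IsParamSol R1 E Et DqE T s₀ s₁ th th' qh qh' ↔
      ∃ lam : ℝ → ℝ, (∀ s ∈ Set.Ioo s₀ s₁, 1 ≤ lam s) ∧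
        ∀ᵐ s ∂volume, s ∈ Set.Ioo s₀ s₁ →
          ((∃ w ∈ subdiff (fun v => R1 (qh s) v) (qh' s),
              lam s • w + DqE (th s) (qh s) = 0) ∧
           0 ≤ th' s ∧ 1 ≤ lam s ∧ (lam s - 1) * th' s = 0 ∧
           0 < th' s + R1 (qh s) (qh' s)) := by
  have hchain : ∀ᵐ s, s ∈ Ioo s₀ s₁ →
      deriv (fun r => E (th r) (qh r)) s - Et (th s) (qh s) * th' s
        = ⟪DqE (th s) (qh s), qh' s⟫ := by
    filter_upwards [hACt.ae_hasDerivAt, hACq.ae_hasDerivAt] with s ht hq hs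
    rw [(hE.hasDerivAt_comp (ht hs) (hq hs)).deriv, add_sub_cancel_left]
  constructor
  · intro hP
    refine ⟨fun s => max (localSlope R1 DqE (th s) (qh s)) 1, fun s _ => le_max_right _ _, ?_⟩
    filter_upwards [hchain, hACt.ae_hasDerivAt, hP.nondeg, hP.evi] with s hch ht hnd hevi hs
    rw [hch hs] at hevi
    obtain ⟨hw, hcompl⟩ := subgradient_of_coe_inner_le_neg_M0 hR (hevi hs)
    exact ⟨hw, (ht hs).hasDerivWithinAt.nonneg_of_monotoneOn (isOpen_Ioo.preperfect s hs)
      (hP.mono.mono Ioo_subset_Icc_self), le_max_right _ _, hcompl, hnd hs⟩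
  · rintro ⟨lam, -, hlam⟩
    refine ⟨hACt, hACq, hmap, hACt.monotoneOn (hlam.mono fun s h hs => (h hs).2.1),
      hlam.mono fun s h hs => (h hs).2.2.2.2, ?_⟩
    filter_upwards [hchain, hlam] with s hch h hs
    obtain ⟨hw, -, hlam1, hcompl, -⟩ := h hs
    rw [hch hs]
    exact coe_inner_le_neg_M0_of_subgradient hR hlam1 hw hcompl

theorem statement7 (T s₀ s₁ : ℝ) (hT : 0 < T) (hs : s₀ < s₁)
    (R1 : EuclideanSpace ℝ (Fin d) → EuclideanSpace ℝ (Fin d) → ℝ)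
    (hR : IsFinsler R1) (hcomp : IsCompleteD (finslerDist R1))
    (E Et : ℝ → EuclideanSpace ℝ (Fin d) → ℝ)
    (DqE : ℝ → EuclideanSpace ℝ (Fin d) → EuclideanSpace ℝ (Fin d))
    (hE : IsC1Energy E Et DqE)
    (th th' : ℝ → ℝ) (qh qh' : ℝ → EuclideanSpace ℝ (Fin d))
    (hACt : IsACOn s₀ s₁ th th') (hACq : IsACOn s₀ s₁ qh qh')
    (hmap : ∀ s ∈ Set.Icc s₀ s₁, th s ∈ Set.Icc 0 T) :
    IsParamSol R1 E Et DqE T s₀ s₁ th th' qh qh' ↔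
      ∃ lam : ℝ → ℝ, (∀ s ∈ Set.Ioo s₀ s₁, 1 ≤ lam s) ∧
        ∀ᵐ s ∂volume, s ∈ Set.Ioo s₀ s₁ →
          ((∃ w ∈ subdiff (fun v => R1 (qh s) v) (qh' s),
              lam s • w + DqE (th s) (qh s) = 0) ∧
           0 ≤ th' s ∧ 1 ≤ lam s ∧ (lam s - 1) * th' s = 0 ∧
           0 < th' s + R1 (qh s) (qh' s)) :=
  statement7_general T s₀ s₁ R1 hR E Et DqE hE th th' qh qh' hACt hACq hmap
end

section
/- Let (X,d) be a metric space and F : X → ℝ ∪ {+∞} be convex on (X,d) in the following sense: for all q₀, q₁ in the domain of F and all θ ∈ [0,1] there exists q_θ ∈ X with d(q₀,q_θ) = θ d(q₀,q₁), d(q_θ,q₁) = (1−θ) d(q₀,q₁), and F(q_θ) ≤ (1−θ) F(q₀) + θ F(q₁). Then for every q with F(q) < ∞ the global slope equals the local slope: sup_{q̃ ≠ q} (F(q) − F(q̃))⁺ / d(q,q̃) = limsup_{v → q} (F(q) − F(v))⁺ / d(q,v), where (·)⁺ denotes the positive part (both sides are allowed to equal +∞). -/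
open MeasureTheory Filter Set Function
open scoped Topology ENNReal RealInnerProductSpace

/-- Positive part of an extended real, as an extended nonnegative real. -/
noncomputable def posPartE (x : EReal) : ℝ≥0∞ :=
  if x = ⊤ then ⊤ else ENNReal.ofReal x.toReal

/-! The local slope never exceeds the global one, since the `limsup` runs over points `v ≠ q`.
Conversely, if `v` descends from `q`, the convexity point `q_θ` between `q` and `v` lies at
distance `θ d(q,v)` from `q` and descends by at least `θ (F q - F v)`, so its difference quotient
dominates that of `v`; letting `θ → 0` these points accumulate at `q`. -/

lemma posPartE_coe (r : ℝ) : posPartE (r : EReal) = ENNReal.ofReal r := by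
  simp [posPartE]

lemma posPartE_bot : posPartE ⊥ = 0 := by
  simp [posPartE]

section Slope

variable {X : Type*} [MetricSpace X]

lemma frequently_nhdsNE_of_forall_dist_eq_mul {q v : X} (hv : v ≠ q) {p : X → Prop}
    (h : ∀ θ ∈ Ioc (0 : ℝ) 1, ∃ w, dist q w = θ * dist q v ∧ p w) :
    ∃ᶠ w in 𝓝[≠] q, p w := by
  have hD : 0 < dist q v := dist_pos.mpr hv.symm
  rw [frequently_nhdsWithin_iff, Metric.nhds_basis_ball.frequently_iff]
  intro δ hδ
  set θ := min 1 (δ / (2 * dist q v))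
  have hθ : 0 < θ := lt_min one_pos (by positivity)
  obtain ⟨w, hw, hpw⟩ := h θ ⟨hθ, min_le_left _ _⟩
  have hθD : θ * dist q v < δ := calc
    θ * dist q v ≤ δ / (2 * dist q v) * dist q v := by gcongr; exact min_le_right _ _
    _ = δ / 2 := by field_simp
    _ < δ := half_lt_self hδ
  refine ⟨w, ?_, hpw, ?_⟩
  · rw [Metric.mem_ball, dist_comm, hw]
    exact hθD
  · rintro rfl
    rw [dist_self] at hw
    nlinarith

lemma limsup_nhdsNE_le_iSup₂_ne (f : X → ℝ≥0∞) (q : X) :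
    limsup f (𝓝[≠] q) ≤ ⨆ (v : X) (_ : v ≠ q), f v :=
  limsup_le_of_le (by isBoundedDefault) <|
    eventually_nhdsWithin_of_forall fun v hv => le_iSup₂_of_le v hv le_rfl

/-- `(F q - F v)⁺ / d(q, v)`: its supremum and its `limsup` over `v → q` are the global and the
local slope of `F` at `q`. -/
noncomputable def slopeQuot (F : X → EReal) (q v : X) : ℝ≥0∞ :=
  posPartE (F q - F v) / ENNReal.ofReal (dist q v)

variable {F : X → EReal} {q v : X}

lemma exists_real_of_ne_top_of_ne_bot {x : EReal} (htop : x ≠ ⊤) (hbot : x ≠ ⊥) :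
    ∃ r : ℝ, x = r :=
  ⟨x.toReal, (EReal.coe_toReal htop hbot).symm⟩

lemma slopeQuot_le_slopeQuot_of_le_convexComb (hF : ∀ x, F x ≠ ⊥) (hq : F q ≠ ⊤)
    (hFv : F v ≠ ⊤) (hv : v ≠ q) {θ : ℝ} (hθ : 0 < θ) {w : X} (hdist : dist q w = θ * dist q v)
    (hw : F w ≤ ((1 - θ : ℝ) : EReal) * F q + ((θ : ℝ) : EReal) * F v) :
    slopeQuot F q v ≤ slopeQuot F q w := by
  obtain ⟨a, ha⟩ := exists_real_of_ne_top_of_ne_bot hq (hF q)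
  obtain ⟨b, hb⟩ := exists_real_of_ne_top_of_ne_bot hFv (hF v)
  rw [ha, hb, ← EReal.coe_mul, ← EReal.coe_mul, ← EReal.coe_add] at hw
  obtain ⟨c, hc⟩ := exists_real_of_ne_top_of_ne_bot (ne_top_of_le_ne_top (EReal.coe_ne_top _) hw)
    (hF w)
  rw [hc, EReal.coe_le_coe_iff] at hw
  have hD : 0 < dist q v := dist_pos.mpr hv.symm
  simp only [slopeQuot, ha, hb, hc, ← EReal.coe_sub, posPartE_coe, hdist,
    ← ENNReal.ofReal_div_of_pos hD, ← ENNReal.ofReal_div_of_pos (mul_pos hθ hD)]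
  refine ENNReal.ofReal_le_ofReal ?_
  calc (a - b) / dist q v = θ * (a - b) / (θ * dist q v) := (mul_div_mul_left _ _ hθ.ne').symm
    _ ≤ (a - c) / (θ * dist q v) := by gcongr; linarith

lemma slopeQuot_le_limsup_nhdsNE (hF : ∀ x, F x ≠ ⊥) (hq : F q ≠ ⊤) (hFv : F v ≠ ⊤) (hv : v ≠ q)
    (hseg : ∀ θ ∈ Ioc (0 : ℝ) 1, ∃ w, dist q w = θ * dist q v ∧
      F w ≤ ((1 - θ : ℝ) : EReal) * F q + ((θ : ℝ) : EReal) * F v) :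
    slopeQuot F q v ≤ limsup (slopeQuot F q) (𝓝[≠] q) := by
  refine le_limsup_of_frequently_le' (frequently_nhdsNE_of_forall_dist_eq_mul hv fun θ hθ => ?_)
  obtain ⟨w, hdist, hw⟩ := hseg θ hθ
  exact ⟨w, hdist, slopeQuot_le_slopeQuot_of_le_convexComb hF hq hFv hv hθ.1 hdist hw⟩

end Slope

theorem statement19 {X : Type*} [MetricSpace X] (F : X → EReal)
    (hF : ∀ x, F x ≠ ⊥)
    (hconv : ∀ q₀ q₁ : X, F q₀ ≠ ⊤ → F q₁ ≠ ⊤ → ∀ θ ∈ Set.Icc (0:ℝ) 1,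
      ∃ qθ : X, dist q₀ qθ = θ * dist q₀ q₁ ∧ dist qθ q₁ = (1 - θ) * dist q₀ q₁ ∧
        F qθ ≤ ((1 - θ : ℝ) : EReal) * F q₀ + ((θ : ℝ) : EReal) * F q₁)
    (q : X) (hq : F q ≠ ⊤) :
    (⨆ (v : X) (_ : v ≠ q), posPartE (F q - F v) / ENNReal.ofReal (dist q v))
      = Filter.limsup (fun v => posPartE (F q - F v) / ENNReal.ofReal (dist q v))
          (𝓝[≠] q) := by
  refine le_antisymm (iSup₂_le fun v hv => ?_) (limsup_nhdsNE_le_iSup₂_ne _ q)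
  by_cases hFv : F v = ⊤
  · simp [hFv, posPartE_bot]
  exact slopeQuot_le_limsup_nhdsNE hF hq hFv hv fun θ hθ =>
    (hconv q v hq hFv θ (Ioc_subset_Icc_self hθ)).imp fun _ h => ⟨h.1, h.2.2⟩
end
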